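/- Let P : ℝⁿ → ℝ be ρ-weakly convex, f : ℝⁿ → ℝ differentiable ρ-strongly convex with σ-Lipschitz gradient (σ > ρ ≥ 0), and 0 < α < 2/(σ + ρ). Assume f + P has at least one minimizer. Then the ISTA iterates x^{k+1} = T_α(x^k − α∇f(x^k)) converge to a minimizer of f + P. -/

import Mathlib

/-!
Write `h = f - ρ/2 ‖·‖²`: it is convex with `(σ - ρ)`-smooth gradient `∇f - ρ • id`, hence that
gradient is `1/(σ - ρ)`-cocoercive (Baillon–Haddad). The prox objective is `(1/α - ρ)`-strongly
convex, so the proximal map satisfies `(1 - αρ) ‖T z₁ - T z₂‖² ≤ ⟪T z₁ - T z₂, z₁ - z₂⟫`. The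
forward step is `y ↦ (1 - αρ) y - α ∇h y`, and combining the two estimates shows that the ISTA map
is averaged as soon as `α (σ + ρ) < 2`. Its fixed points are the minimisers of `f + P`, and the
iterates of an averaged map with a fixed point are Fejér monotone and asymptotically regular, so
in finite dimension they converge to a fixed point.
-/

open Set Filter Topology Function
open scoped RealInnerProductSpace

lemma add_le_of_tendsto_of_forall_add_mul_le {a : ℝ → ℝ} {A c D : ℝ}
    (ha : Tendsto a (𝓝[>] 0) (𝓝 A)) (h : ∀ t ∈ Ioo (0 : ℝ) 1, a t + (1 - t) * c ≤ D) :
    A + c ≤ D := by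
  have hc : Tendsto (fun t : ℝ => (1 - t) * c) (𝓝[>] 0) (𝓝 c) :=
    ((by fun_prop : Continuous fun t : ℝ => (1 - t) * c).tendsto' 0 c (by simp)).mono_left
      nhdsWithin_le_nhds
  exact le_of_tendsto (ha.add hc) (eventually_of_mem (Ioo_mem_nhdsGT one_pos) h)

lemma mul_add_lt_two_of_lt_two_div {α σ ρ : ℝ} (hα : 0 < α) (hα2 : α < 2 / (σ + ρ)) :
    α * (σ + ρ) < 2 := by
  rcases le_or_gt (σ + ρ) 0 with h | h
  · nlinarith
  · rwa [lt_div_iff₀ h] at hα2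

section UniformConvex

variable {E : Type*} [NormedAddCommGroup E] [NormedSpace ℝ E]
  {s : Set E} {φ : ℝ → ℝ} {g : E → ℝ} {x y : E}

lemma UniformConvexOn.slope_add_le (hg : UniformConvexOn s φ g) (hx : x ∈ s) (hy : y ∈ s)
    {t : ℝ} (ht₀ : 0 < t) (ht₁ : t ≤ 1) :
    slope (fun r : ℝ => g (x + r • (y - x))) 0 t + (1 - t) * φ ‖y - x‖ ≤ g y - g x := by
  have key := hg.2 hy hx ht₀.le (sub_nonneg.2 ht₁) (add_sub_cancel t 1)
  rw [show t • y + (1 - t) • x = x + t • (y - x) by module, smul_eq_mul, smul_eq_mul] at key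
  rw [slope_def_field, zero_smul, add_zero, sub_zero, div_add' _ _ _ ht₀.ne', div_le_iff₀ ht₀]
  nlinarith

lemma UniformConvexOn.add_le_of_isMinOn (hg : UniformConvexOn s φ g) (hx : x ∈ s)
    (hmin : IsMinOn g s x) (hy : y ∈ s) : g x + φ ‖y - x‖ ≤ g y := by
  have hslope : ∀ t ∈ Ioo (0 : ℝ) 1, 0 + (1 - t) * φ ‖y - x‖ ≤ g y - g x := fun t ht => by
    have hmem : x + t • (y - x) ∈ s := hg.1.add_smul_sub_mem hx hy ⟨ht.1.le, ht.2.le⟩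
    have : 0 ≤ slope (fun r : ℝ => g (x + r • (y - x))) 0 t := by
      rw [slope_def_field, sub_zero, zero_smul, add_zero]
      exact div_nonneg (sub_nonneg.2 (isMinOn_iff.1 hmin _ hmem)) ht.1.le
    linarith [hg.slope_add_le hx hy ht.1 ht.2.le]
  linarith [add_le_of_tendsto_of_forall_add_mul_le tendsto_const_nhds hslope]

end UniformConvex

section InnerProduct

variable {E : Type*} [NormedAddCommGroup E] [InnerProductSpace ℝ E]

lemma quadratic_model_sub_half_norm_sq (a b c : E) (F K ρ : ℝ) :
    (F - ρ / 2 * ‖a‖ ^ 2) + ⟪c - ρ • a, b - a⟫ + (K - ρ) / 2 * ‖b - a‖ ^ 2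
      = F + ⟪c, b - a⟫ + K / 2 * ‖b - a‖ ^ 2 - ρ / 2 * ‖b‖ ^ 2 := by
  rw [show b = a + (b - a) by abel, norm_add_sq_real, add_sub_cancel_left, inner_sub_left,
    real_inner_smul_left]
  ring

lemma cocoercive_of_quadratic_bounds {h : E → ℝ} {h' : E → E} {L : ℝ} (hL : 0 < L)
    (hlow : ∀ x y, h x + ⟪h' x, y - x⟫ ≤ h y)
    (hup : ∀ x y, h y ≤ h x + ⟪h' x, y - x⟫ + L / 2 * ‖y - x‖ ^ 2) (x y : E) :
    1 / L * ‖h' x - h' y‖ ^ 2 ≤ ⟪h' x - h' y, x - y⟫ := by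
  -- compare the lower bound at `x` with the upper bound at `z`, both at the gradient step from `z`
  have half : ∀ x z, h x + ⟪h' x, z - x⟫ + 1 / (2 * L) * ‖h' z - h' x‖ ^ 2 ≤ h z := by
    intro x z
    set e := h' z - h' x
    have hlow' := hlow x (z - L⁻¹ • e)
    have hup' := hup z (z - L⁻¹ • e)
    rw [show z - L⁻¹ • e - x = (z - x) - L⁻¹ • e by abel, inner_sub_right,
      real_inner_smul_right] at hlow'
    rw [show z - L⁻¹ • e - z = -(L⁻¹ • e) by abel, inner_neg_right, real_inner_smul_right,
      norm_neg, norm_smul, Real.norm_of_nonneg (inv_nonneg.2 hL.le)] at hup'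
    have he : ⟪h' z, e⟫ - ⟪h' x, e⟫ = ‖e‖ ^ 2 := by
      rw [← inner_sub_left, real_inner_self_eq_norm_sq]
    field_simp at hlow' hup' ⊢
    nlinarith
  have e1 : ⟪h' x, y - x⟫ + ⟪h' y, x - y⟫ = -⟪h' x - h' y, x - y⟫ := by
    rw [← neg_sub x y, inner_neg_right, inner_sub_left]; ring
  have := add_le_add (half x y) (half y x)
  rw [norm_sub_rev (h' y)] at this
  have hL2 : 1 / (2 * L) * ‖h' x - h' y‖ ^ 2 + 1 / (2 * L) * ‖h' x - h' y‖ ^ 2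
      = 1 / L * ‖h' x - h' y‖ ^ 2 := by field_simp; ring
  linarith

lemma exists_pos_norm_sq_add_le_of_cocoercive {γ α c : ℝ} (hγ : 0 < γ) (hα : 0 < α)
    (hαc : α < 2 * γ * c) :
    ∃ κ > 0, ∀ u s e : E, c * ‖e‖ ^ 2 ≤ ⟪e, u⟫ → γ * ‖s‖ ^ 2 ≤ ⟪s, γ • u - α • e⟫ →
      ‖s‖ ^ 2 + κ * ‖u - s‖ ^ 2 ≤ ‖u‖ ^ 2 := by
  set β := 2 * α * γ * c - α ^ 2
  have hβ : 0 < β := by nlinarith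
  refine ⟨min (β / (2 * α ^ 2)) (1 / 2), lt_min (by positivity) one_half_pos,
    fun u s e hco hfirm => ?_⟩
  -- `γ • (u - s) = p + α • e` below, so `κ` has to absorb both `2 ‖p‖²` and `2 α² ‖e‖²`
  set κ := min (β / (2 * α ^ 2)) (1 / 2)
  set v := γ • u - α • e
  set p := v - γ • s
  have hv : ‖v‖ ^ 2 ≤ γ ^ 2 * ‖u‖ ^ 2 - β * ‖e‖ ^ 2 := by
    rw [norm_sub_sq_real, norm_smul, norm_smul, real_inner_smul_left, real_inner_smul_right,
      real_inner_comm, Real.norm_of_nonneg hγ.le, Real.norm_of_nonneg hα.le]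
    nlinarith [mul_le_mul_of_nonneg_left hco (by positivity : (0 : ℝ) ≤ 2 * α * γ)]
  have hp : ‖p‖ ^ 2 + γ ^ 2 * ‖s‖ ^ 2 ≤ ‖v‖ ^ 2 := by
    rw [norm_sub_sq_real, norm_smul, real_inner_smul_right, real_inner_comm,
      Real.norm_of_nonneg hγ.le]
    nlinarith [mul_le_mul_of_nonneg_left hfirm (by positivity : (0 : ℝ) ≤ 2 * γ)]
  have hus : γ ^ 2 * ‖u - s‖ ^ 2 ≤ 2 * ‖p‖ ^ 2 + 2 * α ^ 2 * ‖e‖ ^ 2 := by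
    have hsplit : γ • (u - s) = p + α • e := by simp only [p, v]; module
    have := parallelogram_law_with_norm ℝ p (α • e)
    rw [← hsplit, norm_smul, norm_smul, Real.norm_of_nonneg hγ.le,
      Real.norm_of_nonneg hα.le] at this
    nlinarith [sq_nonneg ‖p - α • e‖]
  have hκe : κ * (2 * α ^ 2) ≤ β :=
    (le_div_iff₀ (by positivity)).1 (min_le_left _ _)
  have hκp : κ ≤ 1 / 2 := min_le_right _ _
  have hκ : 0 ≤ κ := le_min (by positivity) one_half_pos.le
  have : γ ^ 2 * (‖s‖ ^ 2 + κ * ‖u - s‖ ^ 2) ≤ γ ^ 2 * ‖u‖ ^ 2 := by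
    nlinarith [mul_le_mul_of_nonneg_left hus hκ, mul_le_mul_of_nonneg_right hκe (sq_nonneg ‖e‖),
      mul_le_mul_of_nonneg_right hκp (sq_nonneg ‖p‖)]
  exact le_of_mul_le_mul_left this (by positivity)

end InnerProduct

section Gradient

variable {E : Type*} [NormedAddCommGroup E] [InnerProductSpace ℝ E] [CompleteSpace E]
  {s : Set E} {φ : ℝ → ℝ} {g : E → ℝ} {x y : E}

lemma HasGradientAt.hasDerivAt_comp_add_smul {g' d : E} {t : ℝ}
    (hg : HasGradientAt g g' (x + t • d)) :
    HasDerivAt (fun r : ℝ => g (x + r • d)) ⟪g', d⟫ t := by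
  have hline : HasDerivAt (fun r : ℝ => x + r • d) d t := by
    simpa using ((hasDerivAt_id t).smul_const d).const_add x
  simpa [InnerProductSpace.toDual_apply_apply, comp_def] using
    hg.hasFDerivAt.comp_hasDerivAt t hline

lemma UniformConvexOn.add_inner_gradient_add_le (hg : UniformConvexOn s φ g) (hx : x ∈ s)
    (hy : y ∈ s) {g' : E} (hgrad : HasGradientAt g g' x) :
    g x + ⟪g', y - x⟫ + φ ‖y - x‖ ≤ g y := by
  have hderiv := (show HasGradientAt g g' (x + (0 : ℝ) • (y - x)) by simpa using hgrad)
    |>.hasDerivAt_comp_add_smul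
  have hslope := (hasDerivAt_iff_tendsto_slope.1 hderiv).mono_left (nhdsGT_le_nhdsNE 0)
  have := add_le_of_tendsto_of_forall_add_mul_le hslope
    fun t ht => hg.slope_add_le hx hy ht.1 ht.2.le
  linarith

lemma le_add_inner_gradient_add_of_lipschitz {g' : E → E} {L : ℝ}
    (hg : ∀ x, HasGradientAt g (g' x) x) (hlip : ∀ x y, ‖g' x - g' y‖ ≤ L * ‖x - y‖) (x y : E) :
    g y ≤ g x + ⟪g' x, y - x⟫ + L / 2 * ‖y - x‖ ^ 2 := by
  set d := y - x
  set ψ : ℝ → ℝ := fun t => g (x + t • d) - t * ⟪g' x, d⟫ - L / 2 * t ^ 2 * ‖d‖ ^ 2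
  have hψ : ∀ t, HasDerivAt ψ (⟪g' (x + t • d) - g' x, d⟫ - L * t * ‖d‖ ^ 2) t := fun t => by
    have := (((hg (x + t • d)).hasDerivAt_comp_add_smul.sub
      ((hasDerivAt_id t).mul_const ⟪g' x, d⟫)).sub
      (((hasDerivAt_pow 2 t).const_mul (L / 2)).mul_const (‖d‖ ^ 2)))
    refine HasDerivAt.congr_deriv (f := ψ) this ?_
    rw [inner_sub_left]
    push_cast
    ring
  have hψ' : ∀ t ∈ interior (Ici (0 : ℝ)), ⟪g' (x + t • d) - g' x, d⟫ - L * t * ‖d‖ ^ 2 ≤ 0 := by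
    intro t ht
    rw [interior_Ici, mem_Ioi] at ht
    have hgap : ‖g' (x + t • d) - g' x‖ ≤ L * t * ‖d‖ := by
      simpa [norm_smul, abs_of_pos ht, mul_assoc] using hlip (x + t • d) x
    nlinarith [real_inner_le_norm (g' (x + t • d) - g' x) d, norm_nonneg d]
  have hanti : AntitoneOn ψ (Ici 0) := antitoneOn_of_hasDerivWithinAt_nonpos (convex_Ici 0)
    (HasDerivAt.continuousOn fun t _ => hψ t) (fun t _ => (hψ t).hasDerivWithinAt) hψ'
  have := hanti (mem_Ici.2 le_rfl) (zero_le_one' ℝ) zero_le_one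
  simp only [ψ, one_smul, zero_smul, add_zero, one_pow, zero_mul, mul_one, sub_zero,
    one_mul] at this
  rw [show x + d = y by simp [d]] at this
  linarith

end Gradient

section Averaged

variable {E : Type*} [NormedAddCommGroup E] {κ : ℝ} {Φ : E → E} {x : ℕ → E} {w : E}

-- `θ`-averaged maps `(1 - θ) • id + θ • N`, `N` nonexpansive, are those with `κ = (1 - θ) / θ`
def IsAveraged (κ : ℝ) (Φ : E → E) : Prop :=
  ∀ a b, ‖Φ a - Φ b‖ ^ 2 + κ * ‖(a - b) - (Φ a - Φ b)‖ ^ 2 ≤ ‖a - b‖ ^ 2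

lemma IsAveraged.lipschitzWith_one (hΦ : IsAveraged κ Φ) (hκ : 0 ≤ κ) : LipschitzWith 1 Φ :=
  LipschitzWith.of_dist_le_mul fun a b => by
    rw [NNReal.coe_one, one_mul, dist_eq_norm, dist_eq_norm]
    refine (pow_le_pow_iff_left₀ (norm_nonneg _) (norm_nonneg _) two_ne_zero).1 ?_
    nlinarith [hΦ a b, sq_nonneg ‖(a - b) - (Φ a - Φ b)‖]

lemma IsAveraged.tendsto_sub_succ (hΦ : IsAveraged κ Φ) (hκ : 0 < κ) (hw : IsFixedPt Φ w)
    (hx : ∀ k, x (k + 1) = Φ (x k)) : Tendsto (fun k => x k - x (k + 1)) atTop (𝓝 0) := by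
  set a : ℕ → ℝ := fun k => ‖x k - w‖ ^ 2
  have hstep : ∀ k, a (k + 1) + κ * ‖x k - x (k + 1)‖ ^ 2 ≤ a k := fun k => by
    have := hΦ (x k) w
    rwa [hw.eq, ← hx k, sub_sub_sub_cancel_right] at this
  have hanti : Antitone a := antitone_nat_of_succ_le fun k => by
    nlinarith [hstep k, sq_nonneg ‖x k - x (k + 1)‖]
  obtain ⟨l, hl⟩ : ∃ l, Tendsto a atTop (𝓝 l) :=
    ⟨_, tendsto_atTop_ciInf hanti ⟨0, by rintro _ ⟨k, rfl⟩; positivity⟩⟩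
  have hgap : Tendsto (fun k => (a k - a (k + 1)) / κ) atTop (𝓝 0) := by
    simpa using (hl.sub (hl.comp (tendsto_add_atTop_nat 1))).div_const κ
  have hsq : Tendsto (fun k => ‖x k - x (k + 1)‖ ^ 2) atTop (𝓝 0) :=
    squeeze_zero (fun k => by positivity)
      (fun k => by rw [le_div_iff₀ hκ]; linarith [hstep k]) hgap
  rw [tendsto_zero_iff_norm_tendsto_zero]
  simpa using hsq.sqrt

lemma IsAveraged.exists_tendsto_isFixedPt [ProperSpace E] (hΦ : IsAveraged κ Φ) (hκ : 0 < κ)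
    (hw : IsFixedPt Φ w) (hx : ∀ k, x (k + 1) = Φ (x k)) :
    ∃ L, IsFixedPt Φ L ∧ Tendsto x atTop (𝓝 L) := by
  have hlip := hΦ.lipschitzWith_one hκ.le
  have hfejer : ∀ y, IsFixedPt Φ y → Antitone fun k => dist (x k) y :=
    fun y hy => antitone_nat_of_succ_le fun k => by
      have := hlip.dist_le_mul (x k) y
      rwa [hy.eq, ← hx k, NNReal.coe_one, one_mul] at this
  obtain ⟨L, -, φ, hφ, hxφ⟩ := (isCompact_closedBall w (dist (x 0) w)).tendsto_subseq
    fun k => Metric.mem_closedBall.2 (hfejer w hw (Nat.zero_le k))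
  have hfix : IsFixedPt Φ L := by
    have hnext : Tendsto (fun j => x (φ j) - (x (φ j) - x (φ j + 1))) atTop (𝓝 (L - 0)) :=
      hxφ.sub ((hΦ.tendsto_sub_succ hκ hw hx).comp hφ.tendsto_atTop)
    simp only [sub_sub_cancel, sub_zero, hx] at hnext
    exact tendsto_nhds_unique ((hlip.continuous.tendsto L).comp hxφ) hnext
  refine ⟨L, hfix, tendsto_iff_dist_tendsto_zero.2 ?_⟩
  exact (tendsto_iff_tendsto_subseq_of_antitone (hfejer L hfix) hφ.tendsto_atTop).2
    (tendsto_iff_dist_tendsto_zero.1 hxφ)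

end Averaged

section ProximalGradient

variable {E : Type*} [NormedAddCommGroup E] [InnerProductSpace ℝ E]
  {P f : E → ℝ} {f' T : E → E} {ρ σ α : ℝ}

def IsProximalMap (α : ℝ) (P : E → ℝ) (T : E → E) : Prop :=
  ∀ z t, 1 / (2 * α) * ‖T z - z‖ ^ 2 + P (T z) ≤ 1 / (2 * α) * ‖t - z‖ ^ 2 + P t

def istaMap (α : ℝ) (f' T : E → E) (y : E) : E := T (y - α • f' y)

lemma strongConvexOn_prox_objective (hweak : ConvexOn ℝ univ fun x => P x + ρ / 2 * ‖x‖ ^ 2)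
    (α : ℝ) (z : E) :
    StrongConvexOn univ (1 / α - ρ) fun t => 1 / (2 * α) * ‖t - z‖ ^ 2 + P t := by
  rw [strongConvexOn_iff_convex]
  refine (hweak.add ((((-α⁻¹) • innerₛₗ ℝ z).convexOn convex_univ).add_const
    (1 / (2 * α) * ‖z‖ ^ 2))).congr fun t _ => ?_
  simp only [Pi.add_apply, LinearMap.smul_apply, innerₛₗ_apply_apply, smul_eq_mul,
    norm_sub_sq_real, real_inner_comm z t]
  ring

lemma IsProximalMap.add_sq_le (hT : IsProximalMap α P T)
    (hweak : ConvexOn ℝ univ fun x => P x + ρ / 2 * ‖x‖ ^ 2) (z y : E) :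
    1 / (2 * α) * ‖T z - z‖ ^ 2 + P (T z) + (1 / α - ρ) / 2 * ‖y - T z‖ ^ 2
      ≤ 1 / (2 * α) * ‖y - z‖ ^ 2 + P y :=
  (strongConvexOn_prox_objective hweak α z).add_le_of_isMinOn (mem_univ _)
    (isMinOn_univ_iff.2 (hT z)) (mem_univ y)

lemma IsProximalMap.inner_sub_ge (hT : IsProximalMap α P T)
    (hweak : ConvexOn ℝ univ fun x => P x + ρ / 2 * ‖x‖ ^ 2) (hα : 0 < α) (z₁ z₂ : E) :
    (1 - α * ρ) * ‖T z₁ - T z₂‖ ^ 2 ≤ ⟪T z₁ - T z₂, z₁ - z₂⟫ := by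
  have h₁ := hT.add_sq_le hweak z₁ (T z₂)
  have h₂ := hT.add_sq_le hweak z₂ (T z₁)
  have hid : ‖T z₂ - z₁‖ ^ 2 + ‖T z₁ - z₂‖ ^ 2 - ‖T z₁ - z₁‖ ^ 2 - ‖T z₂ - z₂‖ ^ 2
      = 2 * ⟪T z₁ - T z₂, z₁ - z₂⟫ := by
    simp only [← real_inner_self_eq_norm_sq, inner_sub_left, inner_sub_right, real_inner_comm]
    ring
  rw [norm_sub_rev (T z₂)] at h₁
  field_simp at h₁ h₂
  nlinarith

lemma IsProximalMap.istaMap_add_sq_le (hT : IsProximalMap α P T)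
    (hweak : ConvexOn ℝ univ fun x => P x + ρ / 2 * ‖x‖ ^ 2) (hα : α ≠ 0) (y z : E) :
    P (istaMap α f' T y) + ⟪f' y, istaMap α f' T y - y⟫ + 1 / (2 * α) * ‖istaMap α f' T y - y‖ ^ 2
      + (1 / α - ρ) / 2 * ‖z - istaMap α f' T y‖ ^ 2
      ≤ P z + ⟪f' y, z - y⟫ + 1 / (2 * α) * ‖z - y‖ ^ 2 := by
  have hexpand : ∀ u, 1 / (2 * α) * ‖u - (y - α • f' y)‖ ^ 2
      = 1 / (2 * α) * ‖u - y‖ ^ 2 + ⟪f' y, u - y⟫ + α / 2 * ‖f' y‖ ^ 2 := fun u => by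
    rw [show u - (y - α • f' y) = (u - y) + α • f' y by abel, norm_add_sq_real, norm_smul,
      real_inner_smul_right, real_inner_comm, Real.norm_eq_abs, mul_pow, sq_abs]
    field_simp
  have := hT.add_sq_le hweak (y - α • f' y) z
  rw [hexpand, hexpand] at this
  unfold istaMap
  linarith

variable [CompleteSpace E]

lemma isFixedPt_istaMap_of_isMin (hf' : ∀ x, HasGradientAt f (f' x) x)
    (hlip : ∀ x y, ‖f' x - f' y‖ ≤ σ * ‖x - y‖) (hT : IsProximalMap α P T)
    (hweak : ConvexOn ℝ univ fun x => P x + ρ / 2 * ‖x‖ ^ 2) (hα : 0 < α)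
    (hα2 : α < 2 / (σ + ρ)) {w : E} (hw : ∀ z, f w + P w ≤ f z + P z) :
    IsFixedPt (istaMap α f' T) w := by
  have hprox := hT.istaMap_add_sq_le (f' := f') hweak hα.ne' w w
  set t := istaMap α f' T w
  have hdesc := le_add_inner_gradient_add_of_lipschitz hf' hlip w t
  have hmin := hw t
  simp only [sub_self, inner_zero_right, norm_zero, add_zero, ne_eq, OfNat.ofNat_ne_zero,
    not_false_eq_true, zero_pow, mul_zero] at hprox
  rw [norm_sub_rev w] at hprox
  have hcoef : 0 < 1 / α - (σ + ρ) / 2 := by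
    rw [sub_pos, div_lt_div_iff₀ two_pos hα]
    linarith [mul_add_lt_two_of_lt_two_div hα hα2]
  have hsq : (1 / α - (σ + ρ) / 2) * ‖t - w‖ ^ 2 ≤ 0 := by
    have : 1 / (2 * α) + (1 / α - ρ) / 2 - σ / 2 = 1 / α - (σ + ρ) / 2 := by ring
    nlinarith
  have : ‖t - w‖ ^ 2 = 0 :=
    le_antisymm (nonpos_of_mul_nonpos_right hsq hcoef) (sq_nonneg _)
  exact sub_eq_zero.1 (by simpa using this)

lemma isMin_of_isFixedPt_istaMap (hf' : ∀ x, HasGradientAt f (f' x) x)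
    (hstrong : ConvexOn ℝ univ fun x => f x - ρ / 2 * ‖x‖ ^ 2) (hT : IsProximalMap α P T)
    (hweak : ConvexOn ℝ univ fun x => P x + ρ / 2 * ‖x‖ ^ 2) (hα : α ≠ 0) {L : E}
    (hL : IsFixedPt (istaMap α f' T) L) (z : E) : f L + P L ≤ f z + P z := by
  have hprox := hT.istaMap_add_sq_le (f' := f') hweak hα L z
  rw [hL.eq, sub_self, inner_zero_right, norm_zero] at hprox
  have hfirst := (strongConvexOn_iff_convex.2 hstrong).add_inner_gradient_add_le (mem_univ L)
    (mem_univ z) (hf' L)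
  have : (1 / α - ρ) / 2 = 1 / (2 * α) - ρ / 2 := by ring
  nlinarith

lemma isAveraged_istaMap (hf' : ∀ x, HasGradientAt f (f' x) x)
    (hstrong : ConvexOn ℝ univ fun x => f x - ρ / 2 * ‖x‖ ^ 2)
    (hlip : ∀ x y, ‖f' x - f' y‖ ≤ σ * ‖x - y‖) (hT : IsProximalMap α P T)
    (hweak : ConvexOn ℝ univ fun x => P x + ρ / 2 * ‖x‖ ^ 2) (hσρ : ρ < σ) (hα : 0 < α)
    (hα2 : α < 2 / (σ + ρ)) : ∃ κ > 0, IsAveraged κ (istaMap α f' T) := by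
  set h' : E → E := fun x => f' x - ρ • x
  have hcoco : ∀ a b, 1 / (σ - ρ) * ‖h' a - h' b‖ ^ 2 ≤ ⟪h' a - h' b, a - b⟫ :=
    cocoercive_of_quadratic_bounds (h := fun x => f x - ρ / 2 * ‖x‖ ^ 2) (sub_pos.2 hσρ)
      (fun x y => by
        have hfirst := (strongConvexOn_iff_convex.2 hstrong).add_inner_gradient_add_le
          (mem_univ x) (mem_univ y) (hf' x)
        have := quadratic_model_sub_half_norm_sq x y (f' x) (f x) ρ ρ
        simp only [sub_self, zero_div, zero_mul, add_zero] at this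
        simp only [h']
        linarith)
      (fun x y => by
        have := quadratic_model_sub_half_norm_sq x y (f' x) (f x) σ ρ
        simp only [h']
        linarith [le_add_inner_gradient_add_of_lipschitz hf' hlip x y])
  have hαρ := mul_add_lt_two_of_lt_two_div hα hα2
  obtain ⟨κ, hκ, hineq⟩ := exists_pos_norm_sq_add_le_of_cocoercive (E := E) (γ := 1 - α * ρ)
    (c := 1 / (σ - ρ)) (by nlinarith [mul_pos hα (sub_pos.2 hσρ)]) hα
    (by rw [mul_one_div, lt_div_iff₀ (sub_pos.2 hσρ)]; nlinarith)
  refine ⟨κ, hκ, fun a b => hineq (a - b) _ (h' a - h' b) (hcoco a b) ?_⟩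
  have := hT.inner_sub_ge hweak hα (a - α • f' a) (b - α • f' b)
  rwa [show (a - α • f' a) - (b - α • f' b) = (1 - α * ρ) • (a - b) - α • (h' a - h' b) by
    simp only [h']; module] at this

end ProximalGradient

theorem ista_converges_general_data_term_general
    (n : ℕ)
    (P f : EuclideanSpace ℝ (Fin n) → ℝ)
    (f' : EuclideanSpace ℝ (Fin n) → EuclideanSpace ℝ (Fin n))
    (hf' : ∀ x, HasGradientAt f (f' x) x)
    (ρ σ α : ℝ) (hσρ : ρ < σ)
    (hweak : ConvexOn ℝ univ (fun x => P x + ρ / 2 * ‖x‖ ^ 2))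
    (hstrong : ConvexOn ℝ univ (fun x => f x - ρ / 2 * ‖x‖ ^ 2))
    (hlip : ∀ x y, ‖f' x - f' y‖ ≤ σ * ‖x - y‖)
    (hα : 0 < α) (hα2 : α < 2 / (σ + ρ))
    (hminex : ∃ w, ∀ z, f w + P w ≤ f z + P z)
    (T : EuclideanSpace ℝ (Fin n) → EuclideanSpace ℝ (Fin n))
    (hT : ∀ z t, 1 / (2 * α) * ‖T z - z‖ ^ 2 + P (T z) ≤ 1 / (2 * α) * ‖t - z‖ ^ 2 + P t)
    (x : ℕ → EuclideanSpace ℝ (Fin n))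
    (hrec : ∀ k, x (k + 1) = T (x k - α • f' (x k))) :
    ∃ L, Tendsto x atTop (nhds L) ∧ ∀ z, f L + P L ≤ f z + P z := by
  obtain ⟨w, hw⟩ := hminex
  obtain ⟨κ, hκ, hΦ⟩ := isAveraged_istaMap hf' hstrong hlip hT hweak hσρ hα hα2
  obtain ⟨L, hL, hxL⟩ := hΦ.exists_tendsto_isFixedPt hκ
    (isFixedPt_istaMap_of_isMin hf' hlip hT hweak hα hα2 hw) hrec
  exact ⟨L, hxL, isMin_of_isFixedPt_istaMap hf' hstrong hT hweak hα.ne' hL⟩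

theorem ista_converges_general_data_term
    (n : ℕ)
    (P f : EuclideanSpace ℝ (Fin n) → ℝ)
    (f' : EuclideanSpace ℝ (Fin n) → EuclideanSpace ℝ (Fin n))
    (hf' : ∀ x, HasGradientAt f (f' x) x)
    (ρ σ α : ℝ) (hρ : 0 ≤ ρ) (hσρ : ρ < σ)
    (hweak : ConvexOn ℝ univ (fun x => P x + ρ / 2 * ‖x‖ ^ 2))
    (hstrong : ConvexOn ℝ univ (fun x => f x - ρ / 2 * ‖x‖ ^ 2))
    (hlip : ∀ x y, ‖f' x - f' y‖ ≤ σ * ‖x - y‖)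
    (hα : 0 < α) (hα2 : α < 2 / (σ + ρ))
    (hminex : ∃ w, ∀ z, f w + P w ≤ f z + P z)
    (T : EuclideanSpace ℝ (Fin n) → EuclideanSpace ℝ (Fin n))
    (hT : ∀ z t, 1 / (2 * α) * ‖T z - z‖ ^ 2 + P (T z) ≤ 1 / (2 * α) * ‖t - z‖ ^ 2 + P t)
    (x : ℕ → EuclideanSpace ℝ (Fin n))
    (hrec : ∀ k, x (k + 1) = T (x k - α • f' (x k))) :
    ∃ L, Tendsto x atTop (nhds L) ∧ ∀ z, f L + P L ≤ f z + P z :=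
  ista_converges_general_data_term_general n P f f' hf' ρ σ α hσρ hweak hstrong hlip hα hα2 hminex T
    hT x hrec
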